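/- arXiv:2110.05807 — 8 statements merged into one kernel-verified Lean document; each statement's English description precedes it below -/
import Mathlib

section
/- Let K ≥ 1, let α : {1,…,K} → [0,1] be strictly decreasing, and let R be a ranked list over [K]. Let χ* : {1,…,K} → [0,1] and χ_R : {1,…,K} → [0,1] be examination probabilities of the optimal list R* = (1,…,K) and of R, respectively, and let χ_max ∈ [0,1] satisfy: χ_R(k) ≥ χ*(k) for every position k (any position is examined the least in the optimal list), and χ*(k) ≤ χ_max for every k. Then Σ_{k=1}^{K} (χ*(k)·α(k) − χ_R(k)·α(R(k))) ≤ K · χ_max · Δ(R), where Δ(R) is the attraction gap of R. -/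
/-!
If `k ≤ K`, then of the `K - k + 1` positions `k, …, K` at least one holds an item `R j ≤ k`
(pigeonhole: only `K - k` items exceed `k`). Hence `α k ≤ α (R j)`, and `α (R j) - α (R k)` is a
sum of consecutive increments of `α ∘ R` between positions `k` and `j`, so it is at most the sum
of their positive parts, `Δ(R)`. Each summand of the regret is therefore at most
`χ*(k) (α k - α (R k)) ≤ χ_max Δ(R)`, and there are `K` summands.
-/

noncomputable def attractionGap (K : ℕ) (α : ℕ → ℝ) (R : ℕ → ℕ) : ℝ :=
  ∑ k ∈ Finset.Icc 1 (K - 1), max 0 (α (R (k + 1)) - α (R k))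

open Finset

theorem exists_mem_Icc_map_le_of_injOn {R : ℕ → ℕ} {k K : ℕ} (hkK : k ≤ K)
    (hmaps : Set.MapsTo R (Set.Icc k K) (Set.Iic K)) (hinj : Set.InjOn R (Set.Icc k K)) :
    ∃ j ∈ Set.Icc k K, R j ≤ k := by
  by_contra! hlarge
  have hcard : #(Icc k K) ≤ #(Ioc k K) :=
    card_le_card_of_injOn R (fun j hj => by
      simpa [Set.mem_Ioc] using
        And.intro (hlarge j (by simpa using hj)) (hmaps (by simpa using hj)))
      (by simpa using hinj)
  simp only [Nat.card_Icc, Nat.card_Ioc] at hcard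
  omega

theorem sub_le_sum_Ico_max_zero_sub (f : ℕ → ℝ) {k j : ℕ} (hkj : k ≤ j) :
    f j - f k ≤ ∑ m ∈ Ico k j, max 0 (f (m + 1) - f m) := by
  induction j, hkj using Nat.le_induction with
  | base => simp
  | succ j hkj ih =>
    rw [sum_Ico_succ_top hkj]
    linarith [le_max_right 0 (f (j + 1) - f j)]

theorem attractionGap_nonneg (K : ℕ) (α : ℕ → ℝ) (R : ℕ → ℕ) : 0 ≤ attractionGap K α R :=
  sum_nonneg fun _ _ => le_max_left _ _

theorem sub_le_attractionGap (K : ℕ) (α : ℕ → ℝ) (R : ℕ → ℕ) {k j : ℕ} (hk : 1 ≤ k)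
    (hkj : k ≤ j) (hjK : j ≤ K) : α (R j) - α (R k) ≤ attractionGap K α R :=
  (sub_le_sum_Ico_max_zero_sub (α ∘ R) hkj).trans <|
    sum_le_sum_of_subset_of_nonneg
      (fun m hm => by simp only [mem_Ico, mem_Icc] at hm ⊢; omega)
      (fun _ _ _ => le_max_left _ _)

theorem sub_map_le_attractionGap {K : ℕ} {α : ℕ → ℝ} (hα : AntitoneOn α (Set.Icc 1 K))
    {R : ℕ → ℕ} (hR : Set.BijOn R (Set.Icc 1 K) (Set.Icc 1 K)) {k : ℕ} (hk : k ∈ Set.Icc 1 K) :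
    α k - α (R k) ≤ attractionGap K α R := by
  have hsub : Set.Icc k K ⊆ Set.Icc 1 K := Set.Icc_subset_Icc_left hk.1
  obtain ⟨j, hj, hRj⟩ := exists_mem_Icc_map_le_of_injOn hk.2
    (fun j hj => (hR.mapsTo (hsub hj)).2) (hR.injOn.mono hsub)
  have hRj_mem := hR.mapsTo (hsub hj)
  have hαk : α k ≤ α (R j) := hα ⟨hRj_mem.1, hRj.trans hk.2⟩ hk hRj
  linarith [sub_le_attractionGap K α R hk.1 hj.1 hj.2]

theorem bubblerank_list_regret_general
    (K : ℕ)
    (α : ℕ → ℝ)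
    (hα01 : ∀ i ∈ Set.Icc 1 K, α i ∈ Set.Icc (0 : ℝ) 1)
    (hαanti : StrictAntiOn α (Set.Icc 1 K))
    (R : ℕ → ℕ) (hR : Set.BijOn R (Set.Icc 1 K) (Set.Icc 1 K))
    (χstar χR : ℕ → ℝ) (χmax : ℝ)
    (hχstar01 : ∀ k ∈ Set.Icc 1 K, χstar k ∈ Set.Icc (0 : ℝ) 1)
    (hA5 : ∀ k ∈ Set.Icc 1 K, χstar k ≤ χR k)
    (hmax : ∀ k ∈ Set.Icc 1 K, χstar k ≤ χmax) :
    ∑ k ∈ Finset.Icc 1 K, (χstar k * α k - χR k * α (R k)) ≤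
      (K : ℝ) * χmax * attractionGap K α R := by
  have hΔ := attractionGap_nonneg K α R
  have hterm : ∀ k ∈ Icc 1 K, χstar k * α k - χR k * α (R k) ≤ χmax * attractionGap K α R := by
    intro k hk
    rw [mem_Icc, ← Set.mem_Icc] at hk
    have hαRk : 0 ≤ α (R k) := (hα01 _ (hR.mapsTo hk)).1
    have hχ : 0 ≤ χstar k := (hχstar01 k hk).1
    calc χstar k * α k - χR k * α (R k)
        ≤ χstar k * (α k - α (R k)) := by
          linarith [mul_le_mul_of_nonneg_right (hA5 k hk) hαRk]
      _ ≤ χstar k * attractionGap K α R :=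
          mul_le_mul_of_nonneg_left (sub_map_le_attractionGap hαanti.antitoneOn hR hk) hχ
      _ ≤ χmax * attractionGap K α R := mul_le_mul_of_nonneg_right (hmax k hk) hΔ
  calc ∑ k ∈ Icc 1 K, (χstar k * α k - χR k * α (R k))
      ≤ ∑ _k ∈ Icc 1 K, χmax * attractionGap K α R := sum_le_sum hterm
    _ = (K : ℝ) * χmax * attractionGap K α R := by
      rw [sum_const, Nat.card_Icc, nsmul_eq_mul, Nat.add_sub_cancel, mul_assoc]

/-- Lemma 3, list regret bound. For a strictly decreasing
attraction function `α : [K] → [0,1]`, a ranked list `R` (a bijection of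
`{1,…,K}`), examination probabilities `χ*` of the optimal list and `χ_R` of
`R` with `χ_R(k) ≥ χ*(k)` and `χ*(k) ≤ χ_max`, the expected regret of `R` is
at most `K · χ_max · Δ(R)`. -/
theorem bubblerank_list_regret
    (K : ℕ) (hK : 1 ≤ K)
    (α : ℕ → ℝ)
    (hα01 : ∀ i ∈ Set.Icc 1 K, α i ∈ Set.Icc (0 : ℝ) 1)
    (hαanti : StrictAntiOn α (Set.Icc 1 K))
    (R : ℕ → ℕ) (hR : Set.BijOn R (Set.Icc 1 K) (Set.Icc 1 K))
    (χstar χR : ℕ → ℝ) (χmax : ℝ)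
    (hχstar01 : ∀ k ∈ Set.Icc 1 K, χstar k ∈ Set.Icc (0 : ℝ) 1)
    (hχR01 : ∀ k ∈ Set.Icc 1 K, χR k ∈ Set.Icc (0 : ℝ) 1)
    (hχmax01 : χmax ∈ Set.Icc (0 : ℝ) 1)
    (hA5 : ∀ k ∈ Set.Icc 1 K, χstar k ≤ χR k)
    (hmax : ∀ k ∈ Set.Icc 1 K, χstar k ≤ χmax) :
    ∑ k ∈ Finset.Icc 1 K, (χstar k * α k - χR k * α (R k)) ≤
      (K : ℝ) * χmax * attractionGap K α R :=
  bubblerank_list_regret_general K α hα01 hαanti R hR χstar χR χmax hχstar01 hA5 hmax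
end

section
/- Let K ≥ 1, let α : {1,…,K} → ℝ be strictly decreasing, and let R̄ be a ranked list over [K]. Let P be a set of item pairs (i,j) with i < j such that: (i) for every position k ∈ {1,…,K−1}, if the adjacent items u = R̄(k) and v = R̄(k+1) satisfy v < u (i.e., the pair is incorrectly ordered in R̄), then (v,u) ∈ P. Let R' be obtained from R̄ by a set of pairwise disjoint adjacent transpositions such that (ii) for every transposed position pair (k,k+1), the unordered pair of items {R̄(k), R̄(k+1)}, written as (min, max), belongs to P. Then Δ(R') ≤ 3 · Σ_{(i,j) ∈ P} (α(i) − α(j)), where Δ(R') is the attraction gap of R'. -/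
/-- `R'` is obtained from `R` by the set `S` of pairwise disjoint adjacent
transpositions: `S ⊆ {1,…,K−1}` contains no two consecutive integers,
`R'(k) = R(k+1)` and `R'(k+1) = R(k)` for every `k ∈ S`, and `R'(m) = R(m)`
for every position `m ∈ {1,…,K}` not involved in any of these swaps. -/
def AdjSwaps (K : ℕ) (R R' : ℕ → ℕ) (S : Finset ℕ) : Prop :=
  S ⊆ Finset.Icc 1 (K - 1) ∧
  (∀ k ∈ S, k + 1 ∉ S) ∧
  (∀ k ∈ S, R' k = R (k + 1) ∧ R' (k + 1) = R k) ∧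
  (∀ m ∈ Set.Icc 1 K, m ∉ S → m - 1 ∉ S → R' m = R m)

/-! At a swapped position `k` the summand of `Δ(R')` is the drop `max 0 (α R̄(k) − α R̄(k+1))` of
`R̄`. At an unswapped position, `R'(k)` and `R'(k+1)` sit at positions between `k − 1` and `k + 2`
of `R̄`, so by subadditivity of the positive part the summand is at most the rise of `R̄` at `k`
plus the rises at the swapped neighbours. Each swapped position is the neighbour of at most two
unswapped ones, whence `Δ(R') ≤ Σ_k rise_k + Σ_{k ∈ S} (drop_k + 2 rise_k)`. Rise plus drop at `k`
is `α(min) − α(max)` for the pair of items at `k`; there is a rise only at an incorrectly ordered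
pair, which lies in `P` like every swapped pair, and distinct positions carry distinct pairs
because `R̄` is injective. -/

open Finset

lemma max_zero_sub_le_add {G : Type*} [AddCommGroup G] [LinearOrder G] [IsOrderedAddMonoid G]
    (x y z : G) : max 0 (z - x) ≤ max 0 (y - x) + max 0 (z - y) := by
  simpa using max_add_add_le_max_add_max (a := (0 : G)) (b := 0) (c := y - x) (d := z - y)

lemma AntitoneOn.max_zero_sub_add_max_zero_sub {β G : Type*} [LinearOrder β] [AddCommGroup G]
    [LinearOrder G] [IsOrderedAddMonoid G] {f : β → G} {s : Set β} (hf : AntitoneOn f s)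
    {u v : β} (hu : u ∈ s) (hv : v ∈ s) :
    max 0 (f v - f u) + max 0 (f u - f v) = f (min u v) - f (max u v) := by
  rcases le_total u v with huv | hvu
  · have := hf hu hv huv
    rw [min_eq_left huv, max_eq_right huv, max_eq_left (sub_nonpos.2 this),
      max_eq_right (sub_nonneg.2 this), zero_add]
  · have := hf hv hu hvu
    rw [min_eq_right hvu, max_eq_left hvu, max_eq_right (sub_nonneg.2 this),
      max_eq_left (sub_nonpos.2 this), add_zero]

lemma sum_ite_comp_mem_le_sum {ι κ M : Type*} [DecidableEq κ] [AddCommMonoid M] [PartialOrder M]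
    [IsOrderedAddMonoid M] {s : Finset ι} {t : Finset κ} {e : ι → κ} (he : Set.InjOn e s)
    {f : κ → M} (hf : ∀ j ∈ t, 0 ≤ f j) :
    ∑ i ∈ s, (if e i ∈ t then f (e i) else 0) ≤ ∑ j ∈ t, f j := by
  rw [← sum_filter, ← sum_image (he.mono (coe_subset.2 (filter_subset _ _)))]
  refine sum_le_sum_of_subset_of_nonneg ?_ fun j hj _ => hf j hj
  intro j hj
  obtain ⟨i, hi, rfl⟩ := mem_image.1 hj
  exact (mem_filter.1 hi).2

noncomputable def adjGap (α : ℕ → ℝ) (R : ℕ → ℕ) (k : ℕ) : ℝ :=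
  max 0 (α (R (k + 1)) - α (R k))

lemma adjGap_nonneg (α : ℕ → ℝ) (R : ℕ → ℕ) (k : ℕ) : 0 ≤ adjGap α R k :=
  le_max_left _ _

def adjPair (R : ℕ → ℕ) (k : ℕ) : ℕ × ℕ :=
  (min (R k) (R (k + 1)), max (R k) (R (k + 1)))

lemma injOn_adjPair {K : ℕ} {R : ℕ → ℕ} (hR : Set.InjOn R (Set.Icc 1 K)) :
    Set.InjOn (adjPair R) (Finset.Icc 1 (K - 1) : Set ℕ) := by
  intro a ha b hb hab
  simp only [coe_Icc, Set.mem_Icc] at ha hb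
  have mem : ∀ j, 1 ≤ j → j ≤ K → j ∈ Set.Icc 1 K := fun j h1 h2 => ⟨h1, h2⟩
  simp only [adjPair, Prod.mk.injEq] at hab
  have key : (R a = R b ∧ R (a + 1) = R (b + 1)) ∨ (R a = R (b + 1) ∧ R (a + 1) = R b) := by
    omega
  rcases key with ⟨h, -⟩ | ⟨h, h'⟩
  · exact hR (mem a (by omega) (by omega)) (mem b (by omega) (by omega)) h
  · have := hR (mem a (by omega) (by omega)) (mem (b + 1) (by omega) (by omega)) h
    have := hR (mem (a + 1) (by omega) (by omega)) (mem b (by omega) (by omega)) h'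
    omega

namespace AdjSwaps

variable {K : ℕ} {R R' : ℕ → ℕ} {S : Finset ℕ}

lemma apply_of_not_mem (h : AdjSwaps K R R' S) {m : ℕ} (hm : m ∈ Set.Icc 1 K) (hmS : m ∉ S) :
    R' m = if m - 1 ∈ S then R (m - 1) else R m := by
  split_ifs with hm1
  · have := (h.2.2.1 _ hm1).2
    rwa [Nat.sub_add_cancel hm.1] at this
  · exact h.2.2.2 m hm hmS hm1

lemma adjGap_le (h : AdjSwaps K R R' S) (α : ℕ → ℝ) {k : ℕ} (hk : k ∈ Finset.Icc 1 (K - 1)) :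
    adjGap α R' k ≤ (if k ∈ S then max 0 (α (R k) - α (R (k + 1))) else 0) +
      (if k - 1 ∈ S then adjGap α R (k - 1) else 0) + adjGap α R k +
      (if k + 1 ∈ S then adjGap α R (k + 1) else 0) := by
  obtain ⟨hk1, hkK⟩ := mem_Icc.1 hk
  have hB := adjGap_nonneg α R
  by_cases hkS : k ∈ S
  · rw [if_pos hkS, adjGap, (h.2.2.1 k hkS).1, (h.2.2.1 k hkS).2]
    have : 0 ≤ if k - 1 ∈ S then adjGap α R (k - 1) else 0 := by split_ifs <;> simp [hB]
    have : 0 ≤ if k + 1 ∈ S then adjGap α R (k + 1) else 0 := by split_ifs <;> simp [hB]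
    linarith [hB k]
  have hRk : R' k = if k - 1 ∈ S then R (k - 1) else R k :=
    h.apply_of_not_mem ⟨hk1, by omega⟩ hkS
  have hRk1 : R' (k + 1) = if k + 1 ∈ S then R (k + 2) else R (k + 1) := by
    split_ifs with hk1S
    · exact (h.2.2.1 _ hk1S).1
    · simpa [hkS] using h.apply_of_not_mem ⟨by omega, by omega⟩ hk1S
  have hleft : max 0 (α (R k) - α (R' k)) ≤ if k - 1 ∈ S then adjGap α R (k - 1) else 0 := by
    rw [hRk]
    split_ifs
    · rw [adjGap, Nat.sub_add_cancel hk1]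
    · simp
  have hright : max 0 (α (R' (k + 1)) - α (R (k + 1))) ≤
      if k + 1 ∈ S then adjGap α R (k + 1) else 0 := by
    rw [hRk1]
    split_ifs <;> simp [adjGap]
  have hfirst : adjGap α R' k ≤
      max 0 (α (R k) - α (R' k)) + max 0 (α (R' (k + 1)) - α (R k)) :=
    max_zero_sub_le_add _ _ _
  have hmid : max 0 (α (R' (k + 1)) - α (R k)) ≤
      adjGap α R k + max 0 (α (R' (k + 1)) - α (R (k + 1))) :=
    max_zero_sub_le_add _ _ _
  rw [if_neg hkS]
  linarith

lemma attractionGap_le (h : AdjSwaps K R R' S) (α : ℕ → ℝ) :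
    attractionGap K α R' ≤ ∑ k ∈ Finset.Icc 1 (K - 1), (adjGap α R k +
      if k ∈ S then max 0 (α (R k) - α (R (k + 1))) + 2 * adjGap α R k else 0) := by
  set I := Finset.Icc 1 (K - 1)
  have hB : ∀ j ∈ S, 0 ≤ adjGap α R j := fun j _ => adjGap_nonneg α R j
  have hpred : ∑ k ∈ I, (if k - 1 ∈ S then adjGap α R (k - 1) else 0) ≤ ∑ j ∈ S, adjGap α R j :=
    sum_ite_comp_mem_le_sum (fun a ha b hb hab => by simp [I] at ha hb hab; omega) hB
  have hsucc : ∑ k ∈ I, (if k + 1 ∈ S then adjGap α R (k + 1) else 0) ≤ ∑ j ∈ S, adjGap α R j :=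
    sum_ite_comp_mem_le_sum (add_left_injective 1).injOn hB
  have hS : ∑ j ∈ S, adjGap α R j = ∑ k ∈ I, if k ∈ S then adjGap α R k else 0 := by
    rw [sum_ite_mem, inter_eq_right.2 h.1]
  have hlocal : attractionGap K α R' ≤
      ∑ k ∈ I, (if k ∈ S then max 0 (α (R k) - α (R (k + 1))) else 0) +
      ∑ k ∈ I, (if k - 1 ∈ S then adjGap α R (k - 1) else 0) + ∑ k ∈ I, adjGap α R k +
      ∑ k ∈ I, (if k + 1 ∈ S then adjGap α R (k + 1) else 0) := by
    simp only [← sum_add_distrib]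
    exact sum_le_sum fun k hk => h.adjGap_le α hk
  have hsplit : ∑ k ∈ I, (adjGap α R k +
      if k ∈ S then max 0 (α (R k) - α (R (k + 1))) + 2 * adjGap α R k else 0) =
      ∑ k ∈ I, (if k ∈ S then max 0 (α (R k) - α (R (k + 1))) else 0) +
      2 * ∑ k ∈ I, (if k ∈ S then adjGap α R k else 0) + ∑ k ∈ I, adjGap α R k := by
    rw [mul_sum, ← sum_add_distrib, ← sum_add_distrib]
    exact sum_congr rfl fun k _ => by split_ifs <;> ring
  linarith

end AdjSwaps

lemma adjGap_add_ite_le {K : ℕ} {α : ℕ → ℝ} (hα : AntitoneOn α (Set.Icc 1 K)) {R : ℕ → ℕ}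
    (hR : Set.MapsTo R (Set.Icc 1 K) (Set.Icc 1 K)) {P : Finset (ℕ × ℕ)} {S : Finset ℕ}
    (hPadj : ∀ k ∈ Finset.Icc 1 (K - 1), R (k + 1) < R k → (R (k + 1), R k) ∈ P)
    (hSP : ∀ k ∈ S, adjPair R k ∈ P) {k : ℕ} (hk : k ∈ Finset.Icc 1 (K - 1)) :
    adjGap α R k + (if k ∈ S then max 0 (α (R k) - α (R (k + 1))) + 2 * adjGap α R k else 0) ≤
      3 * if adjPair R k ∈ P then α (adjPair R k).1 - α (adjPair R k).2 else 0 := by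
  obtain ⟨hk1, hkK⟩ := mem_Icc.1 hk
  have hu : R k ∈ Set.Icc 1 K := hR ⟨hk1, by omega⟩
  have hv : R (k + 1) ∈ Set.Icc 1 K := hR ⟨by omega, by omega⟩
  by_cases hφ : adjPair R k ∈ P
  · have hsum := hα.max_zero_sub_add_max_zero_sub hu hv
    have hB := adjGap_nonneg α R k
    have hg : 0 ≤ max 0 (α (R k) - α (R (k + 1))) := le_max_left _ _
    rw [if_pos hφ, adjPair, ← hsum]
    split_ifs <;> unfold adjGap at hB ⊢ <;> linarith
  · have hkS : k ∉ S := fun hkS => hφ (hSP k hkS)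
    have hle : R k ≤ R (k + 1) := by
      by_contra! hlt
      apply hφ
      simpa [adjPair, min_eq_right hlt.le, max_eq_left hlt.le] using hPadj k hk hlt
    rw [if_neg hφ, if_neg hkS, adjGap, max_eq_left (sub_nonpos.2 (hα hu hv hle))]
    norm_num

theorem bubblerank_off_base_gap_general
    (K : ℕ)
    (α : ℕ → ℝ) (hαanti : StrictAntiOn α (Set.Icc 1 K))
    (Rbar : ℕ → ℕ) (hRbar : Set.BijOn Rbar (Set.Icc 1 K) (Set.Icc 1 K))
    (P : Finset (ℕ × ℕ))
    (hP : ∀ p ∈ P, 1 ≤ p.1 ∧ p.1 < p.2 ∧ p.2 ≤ K)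
    (hPadj : ∀ k ∈ Finset.Icc 1 (K - 1),
      Rbar (k + 1) < Rbar k → (Rbar (k + 1), Rbar k) ∈ P)
    (R' : ℕ → ℕ) (S : Finset ℕ)
    (hswap : AdjSwaps K Rbar R' S)
    (hSP : ∀ k ∈ S,
      (min (Rbar k) (Rbar (k + 1)), max (Rbar k) (Rbar (k + 1))) ∈ P) :
    attractionGap K α R' ≤ 3 * ∑ p ∈ P, (α p.1 - α p.2) := by
  have hval : ∀ p ∈ P, 0 ≤ α p.1 - α p.2 := fun p hp => by
    obtain ⟨h1, h12, h2⟩ := hP p hp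
    exact sub_nonneg.2 (hαanti.antitoneOn ⟨h1, by omega⟩ ⟨by omega, h2⟩ h12.le)
  calc attractionGap K α R'
      ≤ ∑ k ∈ Finset.Icc 1 (K - 1), (adjGap α Rbar k + if k ∈ S then
          max 0 (α (Rbar k) - α (Rbar (k + 1))) + 2 * adjGap α Rbar k else 0) :=
        hswap.attractionGap_le α
    _ ≤ ∑ k ∈ Finset.Icc 1 (K - 1),
          3 * if adjPair Rbar k ∈ P then α (adjPair Rbar k).1 - α (adjPair Rbar k).2 else 0 :=
        sum_le_sum fun k hk =>
          adjGap_add_ite_le hαanti.antitoneOn hRbar.mapsTo hPadj hSP hk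
    _ ≤ 3 * ∑ p ∈ P, (α p.1 - α p.2) := by
        rw [← mul_sum]
        gcongr
        exact sum_ite_comp_mem_le_sum (injOn_adjPair hRbar.injOn) hval

/-- Lemma 4, off-base gap. Let `α : [K] → ℝ` be strictly
decreasing and `R̄` a ranked list over `[K]`. Let `P` be a set of item pairs
`(i,j)` with `i < j` containing every incorrectly-ordered adjacent item pair
of `R̄`, and let `R'` be obtained from `R̄` by pairwise disjoint adjacent
transpositions whose item pairs all belong to `P`. Then
`Δ(R') ≤ 3 Σ_{(i,j) ∈ P} (α(i) − α(j))`. -/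
theorem bubblerank_off_base_gap
    (K : ℕ) (hK : 1 ≤ K)
    (α : ℕ → ℝ) (hαanti : StrictAntiOn α (Set.Icc 1 K))
    (Rbar : ℕ → ℕ) (hRbar : Set.BijOn Rbar (Set.Icc 1 K) (Set.Icc 1 K))
    (P : Finset (ℕ × ℕ))
    (hP : ∀ p ∈ P, 1 ≤ p.1 ∧ p.1 < p.2 ∧ p.2 ≤ K)
    (hPadj : ∀ k ∈ Finset.Icc 1 (K - 1),
      Rbar (k + 1) < Rbar k → (Rbar (k + 1), Rbar k) ∈ P)
    (R' : ℕ → ℕ) (S : Finset ℕ)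
    (hswap : AdjSwaps K Rbar R' S)
    (hSP : ∀ k ∈ S,
      (min (Rbar k) (Rbar (k + 1)), max (Rbar k) (Rbar (k + 1))) ∈ P) :
    attractionGap K α R' ≤ 3 * ∑ p ∈ P, (α p.1 - α p.2) :=
  bubblerank_off_base_gap_general K α hαanti Rbar hRbar P hP hPadj R' S hswap hSP
end

section
/- Let K ≥ 1, let α : {1,…,K} → [0,1] be strictly decreasing, and let R̄ be a ranked list over [K]. Let P be a set of item pairs (i,j) with i < j such that every adjacent pair of items in R̄ that is incorrectly ordered (the item with larger index placed directly above the item with smaller index) belongs to P, and let R' be obtained from R̄ by a set of pairwise disjoint adjacent transpositions each of whose item pairs belongs to P. Let χ* : {1,…,K} → [0,1] and χ_{R'} : {1,…,K} → [0,1] be examination probabilities of the optimal list R* = (1,…,K) and of R', with χ_{R'}(k) ≥ χ*(k) for every k, and let χ_max ∈ [0,1] satisfy χ*(k) ≤ χ_max for every k. Then Σ_{k=1}^{K} (χ*(k)·α(k) − χ_{R'}(k)·α(R'(k))) ≤ 3 K χ_max · Σ_{(i,j) ∈ P} (α(i) − α(j)). -/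
open Finset

theorem sub_le_sum_Ico_max_sub {M : Type*}
    [AddCommGroup M] [LinearOrder M] [IsOrderedAddMonoid M] (a : ℕ → M) {k q : ℕ} (hkq : k ≤ q) :
    a q - a k ≤ ∑ m ∈ Ico k q, max 0 (a (m + 1) - a m) := by
  induction q, hkq using Nat.le_induction with
  | base => simp
  | succ q hkq ih =>
    rw [sum_Ico_succ_top hkq]
    calc a (q + 1) - a k = (a q - a k) + (a (q + 1) - a q) := by abel
      _ ≤ _ := add_le_add ih (le_max_right _ _)

theorem Set.BijOn.exists_lt_apply_le {K : ℕ} {R : ℕ → ℕ}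
    (hR : Set.BijOn R (Set.Icc 1 K) (Set.Icc 1 K))
    {k : ℕ} (hk : k ∈ Set.Icc 1 K) (hkR : k < R k) :
    ∃ q ∈ Set.Icc 1 K, k < q ∧ R q ≤ k := by
  by_contra! h
  -- Otherwise `R` would permute the positions `(k, K]`, leaving no room for `R k`.
  have hsub : Set.Ioc k K ⊆ Set.Icc 1 K := fun q hq => ⟨hk.1.trans hq.1.le, hq.2⟩
  have hmaps : Set.MapsTo R (Set.Ioc k K) (Set.Ioc k K) := fun q hq =>
    ⟨h q (hsub hq) hq.1, (hR.mapsTo (hsub hq)).2⟩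
  have hbij : Set.BijOn R (Set.Ioc k K) (Set.Ioc k K) :=
    ((Set.finite_Ioc k K).injOn_iff_bijOn_of_mapsTo hmaps).1 (hR.injOn.mono hsub)
  obtain ⟨q, hq, hqk⟩ := hbij.surjOn ⟨hkR, (hR.mapsTo hk).2⟩
  exact hq.1.ne (hR.injOn (hsub hq) hk hqk).symm

section

variable {K : ℕ} {α : ℕ → ℝ}

theorem AntitoneOn.sub_apply_le_sum_max_sub (hα : AntitoneOn α (Set.Icc 1 K))
    {R : ℕ → ℕ} (hR : Set.BijOn R (Set.Icc 1 K) (Set.Icc 1 K)) {k : ℕ} (hk : k ∈ Set.Icc 1 K) :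
    α k - α (R k) ≤ ∑ m ∈ Ico 1 K, max 0 (α (R (m + 1)) - α (R m)) := by
  rcases le_or_gt (R k) k with hle | hlt
  · calc α k - α (R k) ≤ 0 := sub_nonpos.2 (hα (hR.mapsTo hk) hk hle)
      _ ≤ _ := sum_nonneg fun _ _ => le_max_left _ _
  · obtain ⟨q, hq, hkq, hRq⟩ := hR.exists_lt_apply_le hk hlt
    calc α k - α (R k) ≤ α (R q) - α (R k) := sub_le_sub_right (hα (hR.mapsTo hq) hk hRq) _
      _ ≤ ∑ m ∈ Ico k q, max 0 (α (R (m + 1)) - α (R m)) :=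
        sub_le_sum_Ico_max_sub (fun m => α (R m)) hkq.le
      _ ≤ _ := sum_le_sum_of_subset_of_nonneg (Ico_subset_Ico hk.1 hq.2)
        fun _ _ _ => le_max_left _ _

variable {P : Finset (ℕ × ℕ)}

theorem AntitoneOn.sub_nonneg_of_mem_pairs (hα : AntitoneOn α (Set.Icc 1 K))
    (hP : ∀ p ∈ P, 1 ≤ p.1 ∧ p.1 < p.2 ∧ p.2 ≤ K) : ∀ p ∈ P, 0 ≤ α p.1 - α p.2 := by
  intro p hp
  obtain ⟨h1, h12, h2⟩ := hP p hp
  exact sub_nonneg.2 (hα ⟨h1, h12.le.trans h2⟩ ⟨h1.trans h12.le, h2⟩ h12.le)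

theorem AntitoneOn.sum_max_sub_le_sum_pairs (hα : AntitoneOn α (Set.Icc 1 K))
    {R : ℕ → ℕ} (hR : Set.BijOn R (Set.Icc 1 K) (Set.Icc 1 K))
    (hP : ∀ p ∈ P, 1 ≤ p.1 ∧ p.1 < p.2 ∧ p.2 ≤ K)
    (hPadj : ∀ k ∈ Finset.Icc 1 (K - 1), R (k + 1) < R k → (R (k + 1), R k) ∈ P) :
    ∑ m ∈ Ico 1 K, max 0 (α (R (m + 1)) - α (R m)) ≤ ∑ p ∈ P, (α p.1 - α p.2) := by
  have hmem : ∀ m ∈ Ico 1 K, m ∈ Set.Icc 1 K ∧ m + 1 ∈ Set.Icc 1 K := fun m hm => by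
    simp only [mem_Ico] at hm
    exact ⟨⟨hm.1, hm.2.le⟩, ⟨by omega, hm.2⟩⟩
  let inversions := (Ico 1 K).filter fun m => R (m + 1) < R m
  have hinv : ∑ m ∈ Ico 1 K, max 0 (α (R (m + 1)) - α (R m)) =
      ∑ m ∈ inversions, (α (R (m + 1)) - α (R m)) := by
    rw [sum_filter]
    refine sum_congr rfl fun m hm => ?_
    obtain ⟨hm0, hm1⟩ := hmem m hm
    split_ifs with h
    · exact max_eq_right (sub_nonneg.2 (hα (hR.mapsTo hm1) (hR.mapsTo hm0) h.le))
    · exact max_eq_left (sub_nonpos.2 (hα (hR.mapsTo hm0) (hR.mapsTo hm1) (not_lt.1 h)))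
  have hinj : Set.InjOn (fun m => (R (m + 1), R m)) inversions := fun x hx y hy hxy =>
    hR.injOn (hmem x (mem_filter.1 hx).1).1 (hmem y (mem_filter.1 hy).1).1
      (congrArg Prod.snd hxy)
  have himage : inversions.image (fun m => (R (m + 1), R m)) ⊆ P := by
    simp only [image_subset_iff, inversions, mem_filter, mem_Ico]
    exact fun m hm => hPadj m (mem_Icc.2 ⟨hm.1.1, by omega⟩) hm.2
  rw [hinv, ← sum_image (f := fun p : ℕ × ℕ => α p.1 - α p.2) hinj]
  exact sum_le_sum_of_subset_of_nonneg himage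
    fun p hp _ => hα.sub_nonneg_of_mem_pairs hP p hp

theorem AntitoneOn.sub_le_sum_pairs_of_min_max_mem (hα : AntitoneOn α (Set.Icc 1 K))
    (hPnn : ∀ p ∈ P, 0 ≤ α p.1 - α p.2) {i j : ℕ} (hi : i ∈ Set.Icc 1 K) (hj : j ∈ Set.Icc 1 K)
    (hij : (min i j, max i j) ∈ P) : α i - α j ≤ ∑ p ∈ P, (α p.1 - α p.2) := by
  rcases le_total i j with h | h
  · rw [min_eq_left h, max_eq_right h] at hij
    exact single_le_sum hPnn hij
  · exact (sub_nonpos.2 (hα hj hi h)).trans (sum_nonneg hPnn)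

end

namespace AdjSwaps

variable {K : ℕ} {R R' : ℕ → ℕ} {S : Finset ℕ}

theorem exists_source (h : AdjSwaps K R R' S) {k : ℕ} (hk : k ∈ Set.Icc 1 K) :
    ∃ j ∈ Set.Icc 1 K, R' k = R j ∧ (j ≤ k ∨ k ∈ S ∧ j = k + 1) := by
  obtain ⟨hS, -, hswap, hfix⟩ := h
  by_cases hkS : k ∈ S
  · have := mem_Icc.1 (hS hkS)
    exact ⟨k + 1, ⟨by omega, by omega⟩, (hswap k hkS).1, .inr ⟨hkS, rfl⟩⟩
  by_cases hk1 : k - 1 ∈ S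
  · have := mem_Icc.1 (hS hk1)
    refine ⟨k - 1, ⟨this.1, by omega⟩, ?_, .inl (Nat.sub_le k 1)⟩
    simpa only [Nat.sub_add_cancel (show 1 ≤ k by omega)] using (hswap _ hk1).2
  · exact ⟨k, hk, hfix k hk hkS hk1, .inl le_rfl⟩

theorem mapsTo (h : AdjSwaps K R R' S) (hR : Set.MapsTo R (Set.Icc 1 K) (Set.Icc 1 K)) :
    Set.MapsTo R' (Set.Icc 1 K) (Set.Icc 1 K) := fun _ hk =>
  let ⟨_, hj, hRj, _⟩ := h.exists_source hk
  hRj ▸ hR hj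

theorem sub_apply_le (h : AdjSwaps K R R' S) {α : ℕ → ℝ} (hα : AntitoneOn α (Set.Icc 1 K))
    (hR : Set.MapsTo R (Set.Icc 1 K) (Set.Icc 1 K)) {P : Finset (ℕ × ℕ)}
    (hPnn : ∀ p ∈ P, 0 ≤ α p.1 - α p.2)
    (hSP : ∀ k ∈ S, (min (R k) (R (k + 1)), max (R k) (R (k + 1))) ∈ P)
    (hbase : ∀ k ∈ Set.Icc 1 K, α k - α (R k) ≤ ∑ p ∈ P, (α p.1 - α p.2))
    {k : ℕ} (hk : k ∈ Set.Icc 1 K) :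
    α k - α (R' k) ≤ 2 * ∑ p ∈ P, (α p.1 - α p.2) := by
  have hsum := sum_nonneg hPnn
  obtain ⟨j, hj, hRj, hjk | ⟨hkS, rfl⟩⟩ := h.exists_source hk
  · have := hbase j hj
    have := hα hj hk hjk
    rw [hRj]
    linarith
  · have := hbase k hk
    have := hα.sub_le_sum_pairs_of_min_max_mem hPnn (hR hk) (hR hj) (hSP k hkS)
    rw [hRj]
    linarith

end AdjSwaps

theorem bubblerank_off_base_regret_general
    (K : ℕ)
    (α : ℕ → ℝ)
    (hα01 : ∀ i ∈ Set.Icc 1 K, α i ∈ Set.Icc (0 : ℝ) 1)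
    (hαanti : StrictAntiOn α (Set.Icc 1 K))
    (Rbar : ℕ → ℕ) (hRbar : Set.BijOn Rbar (Set.Icc 1 K) (Set.Icc 1 K))
    (P : Finset (ℕ × ℕ))
    (hP : ∀ p ∈ P, 1 ≤ p.1 ∧ p.1 < p.2 ∧ p.2 ≤ K)
    (hPadj : ∀ k ∈ Finset.Icc 1 (K - 1),
      Rbar (k + 1) < Rbar k → (Rbar (k + 1), Rbar k) ∈ P)
    (R' : ℕ → ℕ) (S : Finset ℕ)
    (hswap : AdjSwaps K Rbar R' S)
    (hSP : ∀ k ∈ S,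
      (min (Rbar k) (Rbar (k + 1)), max (Rbar k) (Rbar (k + 1))) ∈ P)
    (χstar χR' : ℕ → ℝ) (χmax : ℝ)
    (hχstar01 : ∀ k ∈ Set.Icc 1 K, χstar k ∈ Set.Icc (0 : ℝ) 1)
    (hχmax01 : χmax ∈ Set.Icc (0 : ℝ) 1)
    (hA5 : ∀ k ∈ Set.Icc 1 K, χstar k ≤ χR' k)
    (hmax : ∀ k ∈ Set.Icc 1 K, χstar k ≤ χmax) :
    ∑ k ∈ Finset.Icc 1 K, (χstar k * α k - χR' k * α (R' k)) ≤
      3 * (K : ℝ) * χmax * ∑ p ∈ P, (α p.1 - α p.2) := by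
  set gap := ∑ p ∈ P, (α p.1 - α p.2)
  have hα := hαanti.antitoneOn
  have hPnn := hα.sub_nonneg_of_mem_pairs hP
  have hgap : 0 ≤ gap := sum_nonneg hPnn
  have hbase : ∀ k ∈ Set.Icc 1 K, α k - α (Rbar k) ≤ gap := fun k hk =>
    (hα.sub_apply_le_sum_max_sub hRbar hk).trans (hα.sum_max_sub_le_sum_pairs hRbar hP hPadj)
  have hpos : ∀ k ∈ Finset.Icc 1 K,
      χstar k * α k - χR' k * α (R' k) ≤ χmax * (2 * gap) := by
    intro k hk
    replace hk : k ∈ Set.Icc 1 K := mem_Icc.1 hk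
    have hαR' : 0 ≤ α (R' k) := (hα01 _ (hswap.mapsTo hRbar.mapsTo hk)).1
    calc χstar k * α k - χR' k * α (R' k) ≤ χstar k * (α k - α (R' k)) := by
          rw [mul_sub]; linarith [mul_le_mul_of_nonneg_right (hA5 k hk) hαR']
      _ ≤ χstar k * (2 * gap) := mul_le_mul_of_nonneg_left
          (hswap.sub_apply_le hα hRbar.mapsTo hPnn hSP hbase hk) (hχstar01 k hk).1
      _ ≤ χmax * (2 * gap) := mul_le_mul_of_nonneg_right (hmax k hk) (by linarith)
  have : 0 ≤ K * χmax * gap := mul_nonneg (mul_nonneg K.cast_nonneg hχmax01.1) hgap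
  calc _ ≤ ∑ _k ∈ Finset.Icc 1 K, χmax * (2 * gap) := sum_le_sum hpos
    _ = K * χmax * (2 * gap) := by simp [mul_assoc]
    _ ≤ 3 * K * χmax * gap := by linarith

/-- Lemma 5, off-base regret. Let `α : [K] → [0,1]` be
strictly decreasing, `R̄` a ranked list over `[K]`, `P` a set of item pairs
`(i,j)` with `i < j` containing every incorrectly-ordered adjacent item pair
of `R̄`, and `R'` obtained from `R̄` by pairwise disjoint adjacent
transpositions whose item pairs all belong to `P`. If `χ*` and `χ_{R'}` are
examination probabilities of the optimal list and of `R'` with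
`χ_{R'}(k) ≥ χ*(k)` and `χ*(k) ≤ χ_max`, then
`Σ_k (χ*(k)·α(k) − χ_{R'}(k)·α(R'(k))) ≤ 3 K χ_max Σ_{(i,j)∈P} (α(i) − α(j))`. -/
theorem bubblerank_off_base_regret
    (K : ℕ) (hK : 1 ≤ K)
    (α : ℕ → ℝ)
    (hα01 : ∀ i ∈ Set.Icc 1 K, α i ∈ Set.Icc (0 : ℝ) 1)
    (hαanti : StrictAntiOn α (Set.Icc 1 K))
    (Rbar : ℕ → ℕ) (hRbar : Set.BijOn Rbar (Set.Icc 1 K) (Set.Icc 1 K))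
    (P : Finset (ℕ × ℕ))
    (hP : ∀ p ∈ P, 1 ≤ p.1 ∧ p.1 < p.2 ∧ p.2 ≤ K)
    (hPadj : ∀ k ∈ Finset.Icc 1 (K - 1),
      Rbar (k + 1) < Rbar k → (Rbar (k + 1), Rbar k) ∈ P)
    (R' : ℕ → ℕ) (S : Finset ℕ)
    (hswap : AdjSwaps K Rbar R' S)
    (hSP : ∀ k ∈ S,
      (min (Rbar k) (Rbar (k + 1)), max (Rbar k) (Rbar (k + 1))) ∈ P)
    (χstar χR' : ℕ → ℝ) (χmax : ℝ)
    (hχstar01 : ∀ k ∈ Set.Icc 1 K, χstar k ∈ Set.Icc (0 : ℝ) 1)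
    (hχR'01 : ∀ k ∈ Set.Icc 1 K, χR' k ∈ Set.Icc (0 : ℝ) 1)
    (hχmax01 : χmax ∈ Set.Icc (0 : ℝ) 1)
    (hA5 : ∀ k ∈ Set.Icc 1 K, χstar k ≤ χR' k)
    (hmax : ∀ k ∈ Set.Icc 1 K, χstar k ≤ χmax) :
    ∑ k ∈ Finset.Icc 1 K, (χstar k * α k - χR' k * α (R' k)) ≤
      3 * (K : ℝ) * χmax * ∑ p ∈ P, (α p.1 - α p.2) :=
  bubblerank_off_base_regret_general K α hα01 hαanti Rbar hRbar P hP hPadj R' S hswap hSP χstar χR'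
    χmax hχstar01 hχmax01 hA5 hmax
end

section
/- Let K ≥ 2 and let R_0, R_1, …, R_m be ranked lists over [K] such that for each t ∈ {1,…,m}, R_t is obtained from R_{t−1} by exchanging the items at some pair of adjacent positions (k, k+1) with R_{t−1}(k+1) < R_{t−1}(k) (i.e., each exchange corrects an incorrectly-ordered adjacent item pair). For a ranked list R, let AP(R) = { {R(k), R(k+1)} : k ∈ {1,…,K−1} } be its set of unordered adjacent item pairs. Then m ≤ |V(R_0)| and |AP(R_0) ∪ AP(R_1) ∪ ⋯ ∪ AP(R_m)| ≤ K − 1 + 2·|V(R_0)|, where V(R_0) is the set of incorrectly-ordered item pairs of R_0. -/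
open scoped Classical

/-- The set of incorrectly-ordered item pairs of a ranked list `R` over `[K]`:
`V(R) = {(i,j) : 1 ≤ i < j ≤ K, R⁻¹(i) > R⁻¹(j)}`, i.e. item `j` is placed at
an earlier position than item `i`. -/
noncomputable def incorrectPairs (K : ℕ) (R : ℕ → ℕ) : Finset (ℕ × ℕ) :=
  (Finset.Icc 1 K ×ˢ Finset.Icc 1 K).filter
    (fun p => p.1 < p.2 ∧ ∃ k ∈ Finset.Icc 1 K, ∃ l ∈ Finset.Icc 1 K,
      k < l ∧ R k = p.2 ∧ R l = p.1)

/-- The set of unordered adjacent item pairs of a ranked list `R` over `[K]`: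
`AP(R) = { {R(k), R(k+1)} : k ∈ {1,…,K−1} }`. -/
def adjacentPairs (K : ℕ) (R : ℕ → ℕ) : Finset (Finset ℕ) :=
  (Finset.Icc 1 (K - 1)).image (fun k => ({R k, R (k + 1)} : Finset ℕ))

/-!
Each exchange of an incorrectly-ordered adjacent pair removes exactly that pair from the set of
incorrectly-ordered pairs and leaves every other pair's relative order unchanged, so `|V|` drops
strictly at every step; hence `m ≤ |V(R₀)|`. An exchange at positions `(k, k+1)` changes only the
adjacent pairs at positions `k - 1` and `k + 1`, so each step contributes at most two new
adjacent pairs to the `K - 1` pairs of `R₀`.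
-/

open Finset

lemma self_add_le_of_forall_succ_lt (f : ℕ → ℕ) (m : ℕ) (h : ∀ n < m, f (n + 1) < f n) :
    m + f m ≤ f 0 := by
  induction m with
  | zero => simp
  | succ m ih =>
    have := ih fun n hn => h n (by omega)
    have := h m (by omega)
    omega

lemma card_biUnion_range_le_of_forall_subset_union {α : Type*} [DecidableEq α]
    (s : ℕ → Finset α) (m c : ℕ)
    (h : ∀ n < m, ∃ T : Finset α, #T ≤ c ∧ s (n + 1) ⊆ s n ∪ T) :
    #((range (m + 1)).biUnion s) ≤ #(s 0) + c * m := by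
  induction m with
  | zero => simp
  | succ m ih =>
    obtain ⟨T, hTc, hsub⟩ := h m (by omega)
    have hunion : (range (m + 1 + 1)).biUnion s ⊆ (range (m + 1)).biUnion s ∪ T := by
      rw [range_add_one (n := m + 1), biUnion_insert]
      refine union_subset (hsub.trans (union_subset_union ?_ le_rfl)) subset_union_left
      exact subset_biUnion_of_mem s (self_mem_range_succ m)
    calc #((range (m + 1 + 1)).biUnion s)
        ≤ #((range (m + 1)).biUnion s) + #T := (card_le_card hunion).trans (card_union_le _ _)
      _ ≤ #(s 0) + c * (m + 1) := by
        have := ih fun n hn => h n (by omega)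
        rw [mul_add_one]
        omega

lemma swap_lt_swap_of_lt {k i j : ℕ} (hij : i < j) (hne : ¬(i = k ∧ j = k + 1)) :
    Equiv.swap k (k + 1) i < Equiv.swap k (k + 1) j := by
  simp only [Equiv.swap_apply_def]
  split_ifs <;> omega

lemma swap_mem_Icc {K k i : ℕ} (hk : 1 ≤ k) (hkK : k + 1 ≤ K) (hi : i ∈ Set.Icc 1 K) :
    Equiv.swap k (k + 1) i ∈ Set.Icc 1 K := by
  simp only [Set.mem_Icc, Equiv.swap_apply_def] at hi ⊢
  split_ifs <;> omega

lemma eq_comp_swap_of_exchange {R R' : ℕ → ℕ} {k : ℕ}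
    (h1 : R' k = R (k + 1)) (h2 : R' (k + 1) = R k)
    (h3 : ∀ p, p ≠ k → p ≠ k + 1 → R' p = R p) :
    R' = R ∘ Equiv.swap k (k + 1) := by
  funext p
  simp only [Function.comp_apply, Equiv.swap_apply_def]
  split_ifs with hk hk1
  · rwa [hk]
  · rwa [hk1]
  · exact h3 p hk hk1

lemma card_incorrectPairs_comp_swap_lt {K k : ℕ} {R : ℕ → ℕ}
    (hR : Set.BijOn R (Set.Icc 1 K) (Set.Icc 1 K)) (hk : 1 ≤ k) (hkK : k + 1 ≤ K)
    (hlt : R (k + 1) < R k) :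
    #(incorrectPairs K (R ∘ Equiv.swap k (k + 1))) < #(incorrectPairs K R) := by
  have hkmem : k ∈ Set.Icc 1 K := ⟨hk, by omega⟩
  have hk1mem : k + 1 ∈ Set.Icc 1 K := ⟨by omega, hkK⟩
  apply card_lt_card
  refine ⟨fun p hp => ?_, fun hsup => ?_⟩
  · simp only [incorrectPairs, mem_filter, Function.comp_apply] at hp ⊢
    obtain ⟨hmem, hp12, i, hi, j, hj, hij, hRi, hRj⟩ := hp
    have hne : ¬(i = k ∧ j = k + 1) := by
      rintro ⟨rfl, rfl⟩
      simp only [Equiv.swap_apply_left, Equiv.swap_apply_right] at hRi hRj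
      omega
    have hi' := swap_mem_Icc hk hkK (by simpa using hi)
    have hj' := swap_mem_Icc hk hkK (by simpa using hj)
    refine ⟨hmem, hp12, _, ?_, _, ?_, swap_lt_swap_of_lt hij hne, hRi, hRj⟩
    · simpa using hi'
    · simpa using hj'
  -- the exchanged pair `(R (k+1), R k)` is incorrectly ordered in `R` but not after the swap
  · have hmem : (R (k + 1), R k) ∈ incorrectPairs K R := by
      have hRk := hR.mapsTo hkmem
      have hRk1 := hR.mapsTo hk1mem
      simp only [Set.mem_Icc] at hRk hRk1
      simp only [incorrectPairs, mem_filter, mem_product, mem_Icc]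
      exact ⟨⟨by omega, by omega⟩, hlt, k, ⟨hk, by omega⟩, k + 1, ⟨by omega, hkK⟩, by omega,
        rfl, rfl⟩
    have hswapped := hsup hmem
    simp only [incorrectPairs, mem_filter, Function.comp_apply] at hswapped
    obtain ⟨-, -, i, hi, j, hj, hij, hRi, hRj⟩ := hswapped
    have hi' := hR.injOn (swap_mem_Icc hk hkK (by simpa using hi)) hkmem hRi
    have hj' := hR.injOn (swap_mem_Icc hk hkK (by simpa using hj)) hk1mem hRj
    rw [Equiv.swap_apply_eq_iff, Equiv.swap_apply_left] at hi'
    rw [Equiv.swap_apply_eq_iff, Equiv.swap_apply_right] at hj'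
    omega

lemma card_adjacentPairs_le (K : ℕ) (R : ℕ → ℕ) : #(adjacentPairs K R) ≤ K - 1 :=
  card_image_le.trans (by simp)

lemma adjacentPairs_comp_swap_subset (K k : ℕ) (R : ℕ → ℕ) :
    adjacentPairs K (R ∘ Equiv.swap k (k + 1)) ⊆
      adjacentPairs K R ∪ {{R (k - 1), R (k + 1)}, {R k, R (k + 2)}} := by
  intro S hS
  obtain ⟨j, hj, rfl⟩ := mem_image.mp hS
  simp only [Function.comp_apply, mem_union, mem_insert, mem_singleton]
  by_cases hprev : j + 1 = k
  · subst hprev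
    rw [Equiv.swap_apply_of_ne_of_ne (by omega) (by omega), Equiv.swap_apply_left]
    simp
  by_cases hat : j = k
  · subst hat
    exact Or.inl (mem_image.mpr ⟨j, hj, by simp [pair_comm]⟩)
  by_cases hnext : j = k + 1
  · subst hnext
    rw [Equiv.swap_apply_right, Equiv.swap_apply_of_ne_of_ne (by omega) (by omega)]
    simp
  · refine Or.inl (mem_image.mpr ⟨j, hj, ?_⟩)
    rw [Equiv.swap_apply_of_ne_of_ne hat hnext, Equiv.swap_apply_of_ne_of_ne hprev (by omega)]

theorem bubblerank_swap_bound_general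
    (K : ℕ) (m : ℕ)
    (Rs : ℕ → ℕ → ℕ)
    (hranked : ∀ t ≤ m, Set.BijOn (Rs t) (Set.Icc 1 K) (Set.Icc 1 K))
    (hstep : ∀ t, 1 ≤ t → t ≤ m → ∃ k, 1 ≤ k ∧ k + 1 ≤ K ∧
      Rs (t - 1) (k + 1) < Rs (t - 1) k ∧
      Rs t k = Rs (t - 1) (k + 1) ∧ Rs t (k + 1) = Rs (t - 1) k ∧
      ∀ p, p ≠ k → p ≠ k + 1 → Rs t p = Rs (t - 1) p) :
    m ≤ (incorrectPairs K (Rs 0)).card ∧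
    ((Finset.range (m + 1)).biUnion (fun t => adjacentPairs K (Rs t))).card ≤
      K - 1 + 2 * (incorrectPairs K (Rs 0)).card := by
  have hswap : ∀ n < m, ∃ k, 1 ≤ k ∧ k + 1 ≤ K ∧ Rs n (k + 1) < Rs n k ∧
      Rs (n + 1) = Rs n ∘ Equiv.swap k (k + 1) := by
    intro n hn
    obtain ⟨k, hk, hkK, hlt, h1, h2, h3⟩ := hstep (n + 1) (by omega) hn
    exact ⟨k, hk, hkK, hlt, eq_comp_swap_of_exchange h1 h2 h3⟩
  have hm : m ≤ #(incorrectPairs K (Rs 0)) := by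
    have := self_add_le_of_forall_succ_lt (fun n => #(incorrectPairs K (Rs n))) m fun n hn => by
      obtain ⟨k, hk, hkK, hlt, hRs⟩ := hswap n hn
      simpa only [hRs] using card_incorrectPairs_comp_swap_lt (hranked n hn.le) hk hkK hlt
    omega
  refine ⟨hm, ?_⟩
  have hAP := card_biUnion_range_le_of_forall_subset_union (fun t => adjacentPairs K (Rs t)) m 2
    fun n hn => by
      obtain ⟨k, -, -, -, hRs⟩ := hswap n hn
      exact ⟨_, card_le_two, hRs ▸ adjacentPairs_comp_swap_subset K k (Rs n)⟩
  have := card_adjacentPairs_le K (Rs 0)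
  omega

/-- Lemma 6, swap bound. If each of the ranked lists
`R_1, …, R_m` is obtained from its predecessor by exchanging an
incorrectly-ordered adjacent item pair, then `m ≤ |V(R_0)|` and the total
number of distinct unordered adjacent item pairs appearing in
`R_0, …, R_m` is at most `K − 1 + 2|V(R_0)|`. -/
theorem bubblerank_swap_bound
    (K : ℕ) (hK : 2 ≤ K) (m : ℕ)
    (Rs : ℕ → ℕ → ℕ)
    (hranked : ∀ t ≤ m, Set.BijOn (Rs t) (Set.Icc 1 K) (Set.Icc 1 K))
    (hstep : ∀ t, 1 ≤ t → t ≤ m → ∃ k, 1 ≤ k ∧ k + 1 ≤ K ∧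
      Rs (t - 1) (k + 1) < Rs (t - 1) k ∧
      Rs t k = Rs (t - 1) (k + 1) ∧ Rs t (k + 1) = Rs (t - 1) k ∧
      ∀ p, p ≠ k → p ≠ k + 1 → Rs t p = Rs (t - 1) p) :
    m ≤ (incorrectPairs K (Rs 0)).card ∧
    ((Finset.range (m + 1)).biUnion (fun t => adjacentPairs K (Rs t))).card ≤
      K - 1 + 2 * (incorrectPairs K (Rs 0)).card :=
  bubblerank_swap_bound_general K m Rs hranked hstep
end

section
/- Let K ≥ 2 and let R_0, R_1, …, R_m be ranked lists over [K] such that for each t ∈ {1,…,m}, R_t is obtained from R_{t−1} by exchanging the items at some pair of adjacent positions (k, k+1) with R_{t−1}(k+1) < R_{t−1}(k) (each exchange corrects an incorrectly-ordered adjacent item pair). Let D be obtained from R_m by a set of pairwise disjoint adjacent transpositions. Then |V(D)| ≤ |V(R_0)| + ⌊K/2⌋, where V denotes the set of incorrectly-ordered item pairs. -/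
open scoped Classical

/-! Disjoint adjacent swaps keep the relative order of any two positions other than the two
positions of a single swap, so they create at most one inversion per swap, and a set of
pairwise disjoint swaps among `K` positions has at most `⌊K/2⌋` elements. Swapping an
inverted adjacent pair therefore creates no inversion at all, so the set of inversions only
shrinks along the base lists `R_0, …, R_m`. -/

open Finset

def swapSource (S : Finset ℕ) (p : ℕ) : ℕ :=
  if p ∈ S then p + 1 else if p - 1 ∈ S then p - 1 else p

lemma swapSource_mem_Icc {K : ℕ} {S : Finset ℕ} (hS : S ⊆ Icc 1 (K - 1)) {p : ℕ}
    (hp : p ∈ Icc 1 K) : swapSource S p ∈ Icc 1 K := by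
  have hS' : ∀ k ∈ S, 1 ≤ k ∧ k ≤ K - 1 := fun k hk => mem_Icc.1 (hS hk)
  rw [mem_Icc] at hp ⊢
  unfold swapSource
  split_ifs with h₁ h₂
  · have := hS' p h₁; omega
  · have := hS' _ h₂; omega
  · exact hp

lemma swapSource_lt_swapSource {S : Finset ℕ} (hS : ∀ k ∈ S, k + 1 ∉ S) {q l : ℕ}
    (hql : q < l) (hne : ¬(q ∈ S ∧ l = q + 1)) : swapSource S q < swapSource S l := by
  unfold swapSource
  split_ifs <;> grind

namespace AdjSwaps

variable {K : ℕ} {R D : ℕ → ℕ} {S : Finset ℕ}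

lemma apply_eq_swapSource (h : AdjSwaps K R D S) {p : ℕ} (hp : p ∈ Icc 1 K) :
    D p = R (swapSource S p) := by
  obtain ⟨hS, -, hswap, hfix⟩ := h
  unfold swapSource
  split_ifs with h₁ h₂
  · exact (hswap p h₁).1
  · have : p = p - 1 + 1 := by have := mem_Icc.1 (hS h₂); omega
    rw [this, Nat.add_sub_cancel]
    exact (hswap _ h₂).2
  · exact hfix p (by simpa using hp) h₁ h₂

lemma incorrectPairs_subset (h : AdjSwaps K R D S) :
    incorrectPairs K D ⊆ incorrectPairs K R ∪ S.image (fun k => (R k, R (k + 1))) := by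
  intro p hp
  simp only [incorrectPairs, mem_filter] at hp
  obtain ⟨hpK, hlt, q, hq, l, hl, hql, hDq, hDl⟩ := hp
  by_cases hswapped : q ∈ S ∧ l = q + 1
  · obtain ⟨hqS, rfl⟩ := hswapped
    obtain ⟨h₁, h₂⟩ := h.2.2.1 q hqS
    exact mem_union_right _ (mem_image.2 ⟨q, hqS, Prod.ext (by rw [← h₂, hDl]) (by rw [← h₁, hDq])⟩)
  · refine mem_union_left _ ?_
    simp only [incorrectPairs, mem_filter]
    refine ⟨hpK, hlt, swapSource S q, swapSource_mem_Icc h.1 hq, swapSource S l,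
      swapSource_mem_Icc h.1 hl, swapSource_lt_swapSource h.2.1 hql hswapped, ?_, ?_⟩
    · rw [← h.apply_eq_swapSource hq, hDq]
    · rw [← h.apply_eq_swapSource hl, hDl]

lemma card_incorrectPairs_le (h : AdjSwaps K R D S) :
    (incorrectPairs K D).card ≤ (incorrectPairs K R).card + S.card :=
  calc (incorrectPairs K D).card
      ≤ (incorrectPairs K R ∪ S.image (fun k => (R k, R (k + 1)))).card :=
        card_le_card h.incorrectPairs_subset
    _ ≤ (incorrectPairs K R).card + (S.image (fun k => (R k, R (k + 1)))).card :=
        card_union_le _ _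
    _ ≤ (incorrectPairs K R).card + S.card := by gcongr; exact card_image_le

lemma of_swap {k : ℕ} (hk : 1 ≤ k) (hkK : k + 1 ≤ K) (h₁ : D k = R (k + 1))
    (h₂ : D (k + 1) = R k) (hfix : ∀ p, p ≠ k → p ≠ k + 1 → D p = R p) :
    AdjSwaps K R D {k} := by
  refine ⟨?_, ?_, ?_, ?_⟩
  · simp only [singleton_subset_iff, mem_Icc]; omega
  · simp
  · simpa using ⟨h₁, h₂⟩
  · intro p _ hp hp'
    simp only [mem_singleton] at hp hp'
    exact hfix p hp (by omega)

lemma incorrectPairs_subset_of_swap_inverted {k : ℕ} (h : AdjSwaps K R D {k})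
    (hinv : R (k + 1) < R k) : incorrectPairs K D ⊆ incorrectPairs K R := by
  intro p hp
  rcases mem_union.1 (h.incorrectPairs_subset hp) with hR | hk
  · exact hR
  · obtain rfl : p = (R k, R (k + 1)) := by simpa using hk
    simp only [incorrectPairs, mem_filter] at hp
    exact absurd hp.2.1 hinv.not_gt

end AdjSwaps

lemma card_le_succ_div_two_of_succ_notMem {n : ℕ} {S : Finset ℕ} (hS : S ⊆ Icc 1 n)
    (hsucc : ∀ k ∈ S, k + 1 ∉ S) : S.card ≤ (n + 1) / 2 := by
  have hinj : Set.InjOn (fun k => (k + 1) / 2) S := by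
    intro a ha b hb hab
    have h₁ : a + 1 ≠ b := fun h => hsucc a ha (h ▸ hb)
    have h₂ : b + 1 ≠ a := fun h => hsucc b hb (h ▸ ha)
    simp only at hab
    omega
  have hmaps : ∀ k ∈ S, (k + 1) / 2 ∈ Icc 1 ((n + 1) / 2) := fun k hk => by
    have := mem_Icc.1 (hS hk)
    rw [mem_Icc]
    omega
  simpa using card_le_card_of_injOn _ hmaps hinj

theorem bubblerank_safety_general
    (K : ℕ) (m : ℕ)
    (Rs : ℕ → ℕ → ℕ)
    (hstep : ∀ t, 1 ≤ t → t ≤ m → ∃ k, 1 ≤ k ∧ k + 1 ≤ K ∧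
      Rs (t - 1) (k + 1) < Rs (t - 1) k ∧
      Rs t k = Rs (t - 1) (k + 1) ∧ Rs t (k + 1) = Rs (t - 1) k ∧
      ∀ p, p ≠ k → p ≠ k + 1 → Rs t p = Rs (t - 1) p)
    (D : ℕ → ℕ) (S : Finset ℕ)
    (hswap : AdjSwaps K (Rs m) D S) :
    (incorrectPairs K D).card ≤ (incorrectPairs K (Rs 0)).card + K / 2 := by
  have hbase : ∀ t ≤ m, incorrectPairs K (Rs t) ⊆ incorrectPairs K (Rs 0) := by
    intro t ht
    induction t with
    | zero => exact subset_rfl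
    | succ t ih =>
      obtain ⟨k, hk, hkK, hinv, h₁, h₂, hfix⟩ := hstep (t + 1) (by omega) ht
      exact ((AdjSwaps.of_swap hk hkK h₁ h₂ hfix).incorrectPairs_subset_of_swap_inverted
        hinv).trans (ih (by omega))
  have hS : S.card ≤ K / 2 := by
    have := card_le_succ_div_two_of_succ_notMem hswap.1 hswap.2.1
    omega
  calc (incorrectPairs K D).card
      ≤ (incorrectPairs K (Rs m)).card + S.card := hswap.card_incorrectPairs_le
    _ ≤ (incorrectPairs K (Rs 0)).card + K / 2 := add_le_add (card_le_card (hbase m le_rfl)) hS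

/-- Lemma 1, safety of BubbleRank. If each base list
`R_1, …, R_m` is obtained from its predecessor by exchanging an
incorrectly-ordered adjacent item pair, and a displayed list `D` is obtained
from `R_m` by pairwise disjoint adjacent transpositions, then
`|V(D)| ≤ |V(R_0)| + ⌊K/2⌋`. -/
theorem bubblerank_safety
    (K : ℕ) (hK : 2 ≤ K) (m : ℕ)
    (Rs : ℕ → ℕ → ℕ)
    (hranked : ∀ t ≤ m, Set.BijOn (Rs t) (Set.Icc 1 K) (Set.Icc 1 K))
    (hstep : ∀ t, 1 ≤ t → t ≤ m → ∃ k, 1 ≤ k ∧ k + 1 ≤ K ∧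
      Rs (t - 1) (k + 1) < Rs (t - 1) k ∧
      Rs t k = Rs (t - 1) (k + 1) ∧ Rs t (k + 1) = Rs (t - 1) k ∧
      ∀ p, p ≠ k → p ≠ k + 1 → Rs t p = Rs (t - 1) p)
    (D : ℕ → ℕ) (S : Finset ℕ)
    (hswap : AdjSwaps K (Rs m) D S) :
    (incorrectPairs K D).card ≤ (incorrectPairs K (Rs 0)).card + K / 2 :=
  bubblerank_safety_general K m Rs hstep D S hswap
end

section
/- Let δ ∈ (0, 1/e], L = log(1/δ), and let a, b be reals with a > b ≥ 0 and a + b > 0; set c = (a − b)/(a + b). Let T ∈ ℕ and let (s_t)_{t=0}^{T} be real numbers and (n_t)_{t=0}^{T} be nonnegative reals with s_0 = 0, n_0 = 0, satisfying for every t ∈ {1,…,T}: (i) c·n_t − 2·√(n_t·L) ≤ s_t; and (ii) if s_{t−1} ≤ 2·√(n_{t−1}·L), then n_{t−1} ≤ n_t ≤ n_{t−1} + 1 and |s_t − s_{t−1}| ≤ n_t − n_{t−1}, while otherwise s_t = s_{t−1} and n_t = n_{t−1}. Then s_T ≤ 15·((a + b)/(a − b))·L. -/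
/-!
While the pair is still randomized, a step raises `s` by at most one above `2√(n L)`; once
`s` exceeds that threshold, both sequences freeze. So every value of `s` is either a frozen
earlier value or at most `2√(n L) + 1`, and in the latter case the lower bound
`c n - 2√(n L) ≤ s` forces `c n ≤ 4√(n L) + 1`, a quadratic inequality in `√(n L)` that
caps `2√(n L) + 1` by `15 L / c`.
-/

open Real

lemma one_le_log_one_div_of_le_exp_neg_one {δ : ℝ} (hδ0 : 0 < δ) (hδe : δ ≤ (exp 1)⁻¹) :
    1 ≤ log (1 / δ) := by
  rw [le_log_iff_exp_le (by positivity), le_div_iff₀ hδ0, ← le_div_iff₀' (exp_pos 1)]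
  simpa [one_div] using hδe

lemma le_five_mul_of_sq_le {x L : ℝ} (hL : 0 ≤ L) (h : x ^ 2 ≤ 4 * x * L + L ^ 2) :
    x ≤ 5 * L := by
  -- `x² - 4xL - L² = (x - 5L)(x + L) + 4L²`
  nlinarith

lemma two_mul_add_one_le_of_mul_sq_le {c L y : ℝ} (hc0 : 0 < c) (hc1 : c ≤ 1) (hL : 1 ≤ L)
    (h : c * y ^ 2 ≤ (4 * y + 1) * L) :
    2 * y + 1 ≤ 15 * c⁻¹ * L := by
  have hcy : c * y ≤ 5 * L := le_five_mul_of_sq_le (by linarith) <| by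
    calc (c * y) ^ 2 = c * (c * y ^ 2) := by ring
      _ ≤ c * ((4 * y + 1) * L) := by gcongr
      _ = 4 * (c * y) * L + c * L := by ring
      _ ≤ 4 * (c * y) * L + L ^ 2 := by nlinarith
  have hL_le : L ≤ c⁻¹ * L := le_mul_of_one_le_left (by linarith) (one_le_inv₀ hc0 |>.mpr hc1)
  have hy_le : y ≤ 5 * c⁻¹ * L := by
    rw [mul_comm 5, mul_assoc, le_inv_mul_iff₀ hc0]
    exact hcy
  linarith

lemma le_two_sqrt_add_one_of_randomized {s₀ s₁ n₀ n₁ L : ℝ} (hL : 0 ≤ L)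
    (hrand : s₀ ≤ 2 * √(n₀ * L)) (hmono : n₀ ≤ n₁) (hinc : n₁ ≤ n₀ + 1)
    (hs : s₁ - s₀ ≤ n₁ - n₀) :
    s₁ ≤ 2 * √(n₁ * L) + 1 := by
  have : √(n₀ * L) ≤ √(n₁ * L) := sqrt_le_sqrt (mul_le_mul_of_nonneg_right hmono hL)
  linarith

lemma two_sqrt_add_one_le_of_lower_bound {c L n s : ℝ} (hc0 : 0 < c) (hc1 : c ≤ 1)
    (hL : 1 ≤ L) (hn : 0 ≤ n) (hlow : c * n - 2 * √(n * L) ≤ s)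
    (hs : s ≤ 2 * √(n * L) + 1) :
    2 * √(n * L) + 1 ≤ 15 * c⁻¹ * L := by
  refine two_mul_add_one_le_of_mul_sq_le hc0 hc1 hL ?_
  rw [sq_sqrt (by positivity), ← mul_assoc]
  exact mul_le_mul_of_nonneg_right (by linarith) (by linarith)

theorem bubblerank_cumulative_click_loss_general
    (δ L a b c : ℝ) (T : ℕ) (s n : ℕ → ℝ)
    (hδ0 : 0 < δ) (hδe : δ ≤ (Real.exp 1)⁻¹)
    (hL : L = Real.log (1 / δ))
    (hba : b < a) (hb0 : 0 ≤ b) (hab : 0 < a + b)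
    (hc : c = (a - b) / (a + b))
    (hs0 : s 0 = 0)
    (hnneg : ∀ t ≤ T, 0 ≤ n t)
    (hlower : ∀ t, 1 ≤ t → t ≤ T →
      c * n t - 2 * Real.sqrt (n t * L) ≤ s t)
    (hstep : ∀ t, 1 ≤ t → t ≤ T →
      (s (t - 1) ≤ 2 * Real.sqrt (n (t - 1) * L) →
        n (t - 1) ≤ n t ∧ n t ≤ n (t - 1) + 1 ∧
          |s t - s (t - 1)| ≤ n t - n (t - 1)) ∧
      (¬ s (t - 1) ≤ 2 * Real.sqrt (n (t - 1) * L) →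
        s t = s (t - 1) ∧ n t = n (t - 1))) :
    s T ≤ 15 * ((a + b) / (a - b)) * L := by
  have hL1 : 1 ≤ L := hL ▸ one_le_log_one_div_of_le_exp_neg_one hδ0 hδe
  have hc0 : 0 < c := hc ▸ div_pos (by linarith) hab
  have hc1 : c ≤ 1 := by rw [hc, div_le_one hab]; linarith
  rw [← inv_div, ← hc]
  suffices ∀ t ≤ T, s t ≤ 15 * c⁻¹ * L from this T le_rfl
  intro t
  induction t with
  | zero => intro _; rw [hs0]; positivity
  | succ t ih =>
    intro ht
    obtain ⟨hrandomized, hfrozen⟩ := hstep (t + 1) (by omega) ht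
    rw [Nat.add_sub_cancel] at hrandomized hfrozen
    by_cases hrand : s t ≤ 2 * √(n t * L)
    · obtain ⟨hmono, hinc, hs⟩ := hrandomized hrand
      have hupper := le_two_sqrt_add_one_of_randomized (by linarith) hrand hmono hinc
        (le_abs_self _ |>.trans hs)
      exact hupper.trans <| two_sqrt_add_one_le_of_lower_bound hc0 hc1 hL1 (hnneg _ ht)
        (hlower _ (by omega) ht) hupper
    · rw [(hfrozen hrand).1]
      exact ih (by omega)

/-- deterministic core of Lemma 7, cumulative click loss.
Let `δ ∈ (0, 1/e]`, `L = log(1/δ)`, `a > b ≥ 0` with `a + b > 0`, and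
`c = (a − b)/(a + b)`. Suppose the sequences `(s_t)` and `(n_t)` start at
`s_0 = n_0 = 0`, that `c·n_t − 2√(n_t·L) ≤ s_t` for all `t ∈ {1,…,T}`, and
that at each step, if `s_{t−1} ≤ 2√(n_{t−1}·L)` then `n` increases by at most
one and `|s_t − s_{t−1}| ≤ n_t − n_{t−1}`, and otherwise both sequences stay
constant. Then `s_T ≤ 15 ((a + b)/(a − b)) log(1/δ)`. -/
theorem bubblerank_cumulative_click_loss
    (δ L a b c : ℝ) (T : ℕ) (s n : ℕ → ℝ)
    (hδ0 : 0 < δ) (hδe : δ ≤ (Real.exp 1)⁻¹)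
    (hL : L = Real.log (1 / δ))
    (hba : b < a) (hb0 : 0 ≤ b) (hab : 0 < a + b)
    (hc : c = (a - b) / (a + b))
    (hs0 : s 0 = 0) (hn0 : n 0 = 0)
    (hnneg : ∀ t ≤ T, 0 ≤ n t)
    (hlower : ∀ t, 1 ≤ t → t ≤ T →
      c * n t - 2 * Real.sqrt (n t * L) ≤ s t)
    (hstep : ∀ t, 1 ≤ t → t ≤ T →
      (s (t - 1) ≤ 2 * Real.sqrt (n (t - 1) * L) →
        n (t - 1) ≤ n t ∧ n t ≤ n (t - 1) + 1 ∧
          |s t - s (t - 1)| ≤ n t - n (t - 1)) ∧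
      (¬ s (t - 1) ≤ 2 * Real.sqrt (n (t - 1) * L) →
        s t = s (t - 1) ∧ n t = n (t - 1))) :
    s T ≤ 15 * ((a + b) / (a - b)) * L :=
  bubblerank_cumulative_click_loss_general δ L a b c T s n hδ0 hδe hL hba hb0 hab hc hs0 hnneg
    hlower hstep
end

section
/- Let L ≥ K ≥ 1 and let α : {1,…,L} → [0,1]. For any injective map R : {1,…,K} → {1,…,L}, the expected number of clicks in the cascade model satisfies Σ_{k=1}^{K} [ Π_{i=1}^{k−1} (1 − α(R(i))) ] · α(R(k)) = 1 − Π_{k=1}^{K} (1 − α(R(k))). Consequently, if α is nonincreasing, then this quantity is maximized over all injective maps R : {1,…,K} → {1,…,L} by the optimal list R*(k) = k, i.e., for every injective R, Σ_{k=1}^{K} [ Π_{i=1}^{k−1} (1 − α(R(i))) ] · α(R(k)) ≤ 1 − Π_{k=1}^{K} (1 − α(k)). -/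
/-!
The click sum telescopes: the `k`-th term is the drop of the partial product
`∏_{i<k} (1 - α(R i))`, so the sum is `1 - ∏_{k ≤ K} (1 - α(R k))`. Maximizing it means minimizing
a product of factors `1 - α j` over the `K`-element set `S = R([1, K])`. Compared with `[1, K]`,
the common part contributes equally, while `[1, K] \ S` and `S \ [1, K]` have equal size and every
element of the former lies below every element of the latter, so for antitone `α` its factors are
smaller.
-/

open Finset

theorem Finset.sum_Icc_prod_one_sub_mul {R : Type*} [CommRing R] (a : ℕ → R) (n : ℕ) :
    ∑ k ∈ Icc 1 n, (∏ i ∈ Icc 1 (k - 1), (1 - a i)) * a k = 1 - ∏ k ∈ Icc 1 n, (1 - a k) := by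
  induction n with
  | zero => simp
  | succ n ih =>
    rw [sum_Icc_succ_top (by omega), prod_Icc_succ_top (by omega), ih, Nat.add_sub_cancel]
    ring

section OrderedProducts

variable {ι R : Type*} [CommMonoidWithZero R] [LinearOrder R] [ZeroLEOneClass R] [PosMulMono R]

theorem Finset.prod_le_prod_of_card_eq_of_forall_le {A B : Finset ι} {f : ι → R}
    (hcard : #A = #B) (hf0 : ∀ a ∈ A, 0 ≤ f a) (hle : ∀ a ∈ A, ∀ b ∈ B, f a ≤ f b) :
    ∏ a ∈ A, f a ≤ ∏ b ∈ B, f b := by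
  rcases A.eq_empty_or_nonempty with rfl | hA
  · rw [card_empty, eq_comm, card_eq_zero] at hcard
    simp [hcard]
  obtain ⟨a₀, ha₀, hmax⟩ := A.exists_max_image f hA
  calc ∏ a ∈ A, f a ≤ ∏ _a ∈ A, f a₀ := prod_le_prod hf0 hmax
    _ = ∏ _b ∈ B, f a₀ := by rw [prod_const, prod_const, hcard]
    _ ≤ ∏ b ∈ B, f b := prod_le_prod (fun _ _ => hf0 a₀ ha₀) (hle a₀ ha₀)

theorem Finset.prod_Icc_le_prod_of_card_eq {g : ℕ → R} {L K : ℕ} {S : Finset ℕ}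
    (hS : S ⊆ Icc 1 L) (hcard : #S = K) (hg0 : ∀ i ∈ Icc 1 L, 0 ≤ g i)
    (hg : MonotoneOn g (Set.Icc 1 L)) :
    ∏ k ∈ Icc 1 K, g k ≤ ∏ j ∈ S, g j := by
  have hKL : K ≤ L := by simpa [hcard] using card_le_card hS
  have hIcc : Icc 1 K ⊆ Icc 1 L := Icc_subset_Icc_right hKL
  rw [← prod_inter_mul_prod_sdiff (Icc 1 K) S, ← prod_inter_mul_prod_sdiff S (Icc 1 K), inter_comm]
  refine mul_le_mul_of_nonneg_left ?_ (prod_nonneg fun i hi => hg0 i (hS (mem_inter.1 hi).1))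
  refine prod_le_prod_of_card_eq_of_forall_le (card_sdiff_comm (by simp [hcard]))
    (fun i hi => hg0 i (hIcc (mem_sdiff.1 hi).1)) fun a ha b hb => ?_
  obtain ⟨haK, -⟩ := mem_sdiff.1 ha
  obtain ⟨hbS, hbK⟩ := mem_sdiff.1 hb
  have hb1 : 1 ≤ b := (mem_Icc.1 (hS hbS)).1
  have hab : a ≤ b := by
    rw [mem_Icc] at haK hbK
    omega
  exact hg (by simpa using hIcc haK) (by simpa using hS hbS) hab

end OrderedProducts

theorem cascade_model_optimal_list_general
    (L K : ℕ)
    (α : ℕ → ℝ) (hα01 : ∀ i ∈ Set.Icc 1 L, α i ∈ Set.Icc (0 : ℝ) 1) :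
    (∀ R : ℕ → ℕ, Set.MapsTo R (Set.Icc 1 K) (Set.Icc 1 L) →
      Set.InjOn R (Set.Icc 1 K) →
      ∑ k ∈ Finset.Icc 1 K,
          (∏ i ∈ Finset.Icc 1 (k - 1), (1 - α (R i))) * α (R k) =
        1 - ∏ k ∈ Finset.Icc 1 K, (1 - α (R k))) ∧
    (AntitoneOn α (Set.Icc 1 L) →
      ∀ R : ℕ → ℕ, Set.MapsTo R (Set.Icc 1 K) (Set.Icc 1 L) →
        Set.InjOn R (Set.Icc 1 K) →
        ∑ k ∈ Finset.Icc 1 K,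
            (∏ i ∈ Finset.Icc 1 (k - 1), (1 - α (R i))) * α (R k) ≤
          1 - ∏ k ∈ Finset.Icc 1 K, (1 - α k)) := by
  refine ⟨fun R _ _ => sum_Icc_prod_one_sub_mul (fun i => α (R i)) K, fun hanti R hmaps hinj => ?_⟩
  have hinj' : Set.InjOn R (Icc 1 K : Finset ℕ) := by simpa using hinj
  rw [sum_Icc_prod_one_sub_mul (fun i => α (R i)) K, ← prod_image (f := fun j => 1 - α j) hinj']
  refine sub_le_sub_left (prod_Icc_le_prod_of_card_eq (L := L) ?_ ?_ ?_ ?_) 1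
  · exact image_subset_iff.2 fun k hk => by simpa using hmaps (by simpa using hk)
  · simp [card_image_of_injOn hinj']
  · exact fun i hi => sub_nonneg.2 (hα01 i (by simpa using hi)).2
  · exact fun i hi j hj hij => sub_le_sub_left (hanti hi hj hij) 1

/-- optimality of the sorted list in the cascade model.
In the cascade model with attraction probabilities `α : [L] → [0,1]`, for any
injective ranked list `R : [K] → [L]` the expected number of clicks equals
`1 − Π_{k=1}^K (1 − α(R(k)))`; consequently, if `α` is nonincreasing, it is
maximized by the identity list `R*(k) = k`. -/
theorem cascade_model_optimal_list
    (L K : ℕ) (hK : 1 ≤ K) (hKL : K ≤ L)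
    (α : ℕ → ℝ) (hα01 : ∀ i ∈ Set.Icc 1 L, α i ∈ Set.Icc (0 : ℝ) 1) :
    (∀ R : ℕ → ℕ, Set.MapsTo R (Set.Icc 1 K) (Set.Icc 1 L) →
      Set.InjOn R (Set.Icc 1 K) →
      ∑ k ∈ Finset.Icc 1 K,
          (∏ i ∈ Finset.Icc 1 (k - 1), (1 - α (R i))) * α (R k) =
        1 - ∏ k ∈ Finset.Icc 1 K, (1 - α (R k))) ∧
    (AntitoneOn α (Set.Icc 1 L) →
      ∀ R : ℕ → ℕ, Set.MapsTo R (Set.Icc 1 K) (Set.Icc 1 L) →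
        Set.InjOn R (Set.Icc 1 K) →
        ∑ k ∈ Finset.Icc 1 K,
            (∏ i ∈ Finset.Icc 1 (k - 1), (1 - α (R i))) * α (R k) ≤
          1 - ∏ k ∈ Finset.Icc 1 K, (1 - α k)) :=
  cascade_model_optimal_list_general L K α hα01
end

section
/- Let K ≥ 1, let α : {1,…,K} → [0,1] be nonincreasing, and let R be a bijection of {1,…,K}. Then for every k ∈ {1,…,K}, Π_{i=1}^{k−1} (1 − α(R(i))) ≥ Π_{i=1}^{k−1} (1 − α(i)); that is, in the cascade model every position is examined the least in the optimal list R*(k) = k. -/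
/-!
Put `f i = 1 - α i`, which is nonnegative and monotone on `[1, K]`. The first `k - 1` positions
of `R` carry `k - 1` distinct items `S ⊆ [1, K]`. An `n`-element subset of `[1, K]` has maximum
at least `n`, so peeling off maxima one at a time gives `∏_{j ≤ k - 1} f j ≤ ∏_{j ∈ S} f j`.
-/

open Finset

lemma card_le_pred_of_forall_lt {K a : ℕ} {s : Finset ℕ} (hs : s ⊆ Icc 1 K)
    (hlt : ∀ x ∈ s, x < a) : #s ≤ a - 1 := by
  have hsub : s ⊆ Ico 1 a := fun x hx => mem_Ico.mpr ⟨(mem_Icc.mp (hs hx)).1, hlt x hx⟩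
  simpa using card_le_card hsub

theorem prod_Icc_one_card_le_prod {R : Type*} [CommSemiring R] [PartialOrder R]
    [IsOrderedRing R] {K : ℕ} {f : ℕ → R} (hf0 : ∀ i ∈ Set.Icc 1 K, 0 ≤ f i)
    (hf : MonotoneOn f (Set.Icc 1 K)) {s : Finset ℕ} (hs : s ⊆ Icc 1 K) :
    ∏ i ∈ Icc 1 #s, f i ≤ ∏ i ∈ s, f i := by
  induction s using Finset.induction_on_max with
  | empty => simp
  | insert a s hlt ih =>
    have ha : a ∈ Icc 1 K := hs (mem_insert_self a s)
    have hs' : s ⊆ Icc 1 K := (subset_insert a s).trans hs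
    have hcard : #s + 1 ≤ a := by
      have := card_le_pred_of_forall_lt hs' hlt
      have := (mem_Icc.mp ha).1
      omega
    have hsucc : #s + 1 ∈ Set.Icc 1 K := ⟨by omega, hcard.trans (mem_Icc.mp ha).2⟩
    rw [card_insert_of_notMem fun h => (hlt a h).false, prod_Icc_succ_top (by omega),
      prod_insert fun h => (hlt a h).false, mul_comm (f a)]
    exact mul_le_mul (ih hs') (hf hsucc (mem_Icc.mp ha) hcard) (hf0 _ hsucc)
      (prod_nonneg fun i hi => hf0 i (mem_Icc.mp (hs' hi)))

theorem cascade_model_optimal_list_least_examined_general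
    (K : ℕ)
    (α : ℕ → ℝ) (hα01 : ∀ i ∈ Set.Icc 1 K, α i ∈ Set.Icc (0 : ℝ) 1)
    (hαanti : AntitoneOn α (Set.Icc 1 K))
    (R : ℕ → ℕ) (hR : Set.BijOn R (Set.Icc 1 K) (Set.Icc 1 K)) :
    ∀ k ∈ Set.Icc 1 K,
      ∏ i ∈ Finset.Icc 1 (k - 1), (1 - α i) ≤
        ∏ i ∈ Finset.Icc 1 (k - 1), (1 - α (R i)) := by
  intro k hk
  have hprefix : (Icc 1 (k - 1) : Set ℕ) ⊆ Set.Icc 1 K := fun i hi => by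
    simp only [coe_Icc, Set.mem_Icc] at hi ⊢
    exact ⟨hi.1, by grind⟩
  have hinj : Set.InjOn R (Icc 1 (k - 1)) := hR.injOn.mono hprefix
  have hcard : #((Icc 1 (k - 1)).image R) = k - 1 := by
    rw [card_image_of_injOn hinj, Nat.card_Icc, Nat.add_sub_cancel]
  have himage : (Icc 1 (k - 1)).image R ⊆ Icc 1 K := fun j hj => by
    obtain ⟨i, hi, rfl⟩ := mem_image.mp hj
    exact mem_Icc.mpr (hR.mapsTo (hprefix hi))
  have key := prod_Icc_one_card_le_prod (f := fun i => 1 - α i)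
    (fun i hi => sub_nonneg.mpr (hα01 i hi).2)
    (fun i hi j hj hij => sub_le_sub_left (hαanti hi hj hij) 1) himage
  rwa [hcard, prod_image hinj] at key

/-- Assumption A5 in the cascade model. For nonincreasing
attraction probabilities `α : [K] → [0,1]` and any bijection `R` of `{1,…,K}`,
the cascade-model examination probability of every position `k` in `R`,
`Π_{i=1}^{k−1} (1 − α(R(i)))`, is at least that in the optimal list
`R*(k) = k`, namely `Π_{i=1}^{k−1} (1 − α(i))`. -/
theorem cascade_model_optimal_list_least_examined
    (K : ℕ) (hK : 1 ≤ K)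
    (α : ℕ → ℝ) (hα01 : ∀ i ∈ Set.Icc 1 K, α i ∈ Set.Icc (0 : ℝ) 1)
    (hαanti : AntitoneOn α (Set.Icc 1 K))
    (R : ℕ → ℕ) (hR : Set.BijOn R (Set.Icc 1 K) (Set.Icc 1 K)) :
    ∀ k ∈ Set.Icc 1 K,
      ∏ i ∈ Finset.Icc 1 (k - 1), (1 - α i) ≤
        ∏ i ∈ Finset.Icc 1 (k - 1), (1 - α (R i)) :=
  cascade_model_optimal_list_least_examined_general K α hα01 hαanti R hR
end
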